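/- Let R be a noetherian local ring. The following are equivalent: (1) for each Serre subcategory S of the category of R-modules, MP[S] is either Spec(R), or {p} for some minimal prime ideal p of R, or the empty set; (2) dim R ≤ 1. -/

import Mathlib

/-!
Common framework: a *Serre class* is a class of (bundled) `R`-modules closed under
submodules, quotient modules and extensions.  `MelkerssonCondition R P I` is the
Melkersson condition `(C_I)`: if `Γ_I(M) = M` (every element of `M` is annihilated by
some power of `I`) and `(0 :_M I)` (the `I`-torsion-by-`I` submodule `torsionBySet`)
belongs to the class, then `M` belongs to the class.  `MP R P` is the set of prime
ideals `p` such that the class satisfies `(C_p)`.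
-/

open CategoryTheory

structure SerreClass (R : Type) [CommRing R] where
  mem : ModuleCat.{0} R → Prop
  mem_of_injective : ∀ {M N : ModuleCat.{0} R} (f : M →ₗ[R] N),
    Function.Injective f → mem N → mem M
  mem_of_surjective : ∀ {M N : ModuleCat.{0} R} (f : M →ₗ[R] N),
    Function.Surjective f → mem M → mem N
  mem_of_extension : ∀ {A M B : ModuleCat.{0} R} (f : A →ₗ[R] M) (g : M →ₗ[R] B),
    Function.Injective f → Function.Surjective g →
    LinearMap.range f = LinearMap.ker g → mem A → mem B → mem M

variable (R : Type) [CommRing R]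

/-- `Γ_I(M) = M`: every element of `M` is annihilated by some power of `I`. -/
def IsTorsionByPowers (I : Ideal R) (M : ModuleCat.{0} R) : Prop :=
  ∀ m : M, ∃ n : ℕ, ∀ x ∈ I ^ n, x • m = 0

/-- The Melkersson condition `(C_I)` for a class `P` of `R`-modules:
if `Γ_I(M) = M` and `(0 :_M I) ∈ P` then `M ∈ P`. -/
def MelkerssonCondition (P : ModuleCat.{0} R → Prop) (I : Ideal R) : Prop :=
  ∀ M : ModuleCat.{0} R, IsTorsionByPowers R I M →
    P (ModuleCat.of R (Submodule.torsionBySet R M (I : Set R))) → P M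

/-- `MP[P]`: the set of prime ideals `p` such that `P` satisfies `(C_p)`. -/
def MP (P : ModuleCat.{0} R → Prop) : Set (PrimeSpectrum R) :=
  { p | MelkerssonCondition R P p.asIdeal }

/-- The class `FG` of finitely generated `R`-modules. -/
def FGClass : ModuleCat.{0} R → Prop := fun M => Module.Finite R M

/-- Membership in the extension subcategory `P * Q`: `M` fits in a short exact
sequence `0 → A → M → B → 0` with `A ∈ P` and `B ∈ Q`. -/
def IsExtensionIn (P Q : ModuleCat.{0} R → Prop) (M : ModuleCat.{0} R) : Prop :=
  ∃ (A B : ModuleCat.{0} R) (f : A →ₗ[R] M) (g : M →ₗ[R] B),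
    Function.Injective f ∧ Function.Surjective g ∧
    LinearMap.range f = LinearMap.ker g ∧ P A ∧ Q B

/-- `Supp(P) = ⋃_{M ∈ P} Supp_R M`. -/
def SuppClass (P : ModuleCat.{0} R → Prop) : Set (PrimeSpectrum R) :=
  ⋃ (M : ModuleCat.{0} R) (_ : P M), Module.support R M

/-- `E` is an injective hull of `N`: `E` is injective and contains `N` as an
essential submodule. -/
def IsInjectiveHull (N E : ModuleCat.{0} R) : Prop :=
  Module.Injective R E ∧ ∃ f : N →ₗ[R] E, Function.Injective f ∧
    ∀ W : Submodule R E, W ≠ ⊥ → W ⊓ LinearMap.range f ≠ ⊥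

/-- `M` is `I`-cofinite: `Supp M ⊆ V(I)` and `Ext^i_R(R/I, M)` is a finitely
generated `R`-module for every `i`. -/
noncomputable def IsCofiniteWrt (I : Ideal R) (M : ModuleCat.{0} R) : Prop :=
  Module.support R M ⊆ PrimeSpectrum.zeroLocus (I : Set R) ∧
  ∀ i : ℕ, Module.Finite R
    (((Ext R (ModuleCat.{0} R) i).obj (Opposite.op (ModuleCat.of R (R ⧸ I)))).obj M)

/-- A specialization closed subset of `Spec R`. -/
def SpecializationClosed (W : Set (PrimeSpectrum R)) : Prop :=
  ∀ p ∈ W, ∀ q : PrimeSpectrum R, p.asIdeal ≤ q.asIdeal → q ∈ W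


/-!
If `dim R ≤ 1`, every prime `p ≠ m` is minimal, so `s p ^ c = 0` for some `s ∉ p`; for a
`p`-torsion module `M` this makes `p ^ c M` an `m`-torsion module, and `(C_m)` yields `(C_p)`.
For distinct primes `p`, `q` with `p` minimal, `p + q` is `m`-primary, and `(C_p)`, `(C_q)` yield
`(C_m)`. Both steps rest on the fact that `(0 :_M I) ∈ S` forces `(0 :_M I ^ n) ∈ S`. Hence `MP[S]`
is `Spec R`, a single minimal prime, or empty.

If `dim R ≥ 2`, pick a prime `q` that is neither minimal nor maximal, and let `S` consist of the
modules `M` with `q ^ n M_q = 0` for some `n`. Every `m`-torsion module lies in `S`, so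
`m ∈ MP[S]`, but `⨁ₙ R / q ^ (n + 1)` violates `(C_q)` because `q R_q` is not nilpotent.
-/

open Submodule IsLocalRing

variable {R}

namespace SerreClass

variable (S : SerreClass R) {M N : Type} [AddCommGroup M] [Module R M] [AddCommGroup N] [Module R N]

lemma mem_of_linearEquiv (e : M ≃ₗ[R] N) (h : S.mem (.of R M)) : S.mem (.of R N) :=
  S.mem_of_surjective (M := .of R M) (N := .of R N) e.toLinearMap e.surjective h

lemma mem_of_le {P Q : Submodule R M} (hPQ : P ≤ Q) (hQ : S.mem (.of R Q)) : S.mem (.of R P) :=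
  S.mem_of_injective (M := .of R P) (N := .of R Q) (inclusion hPQ) (inclusion_injective hPQ) hQ

lemma mem_of_forall_coe_mem {P : Submodule R M} {Q : Submodule R P} {T : Submodule R M}
    (hQT : ∀ v ∈ Q, (v : M) ∈ T) (hT : S.mem (.of R T)) : S.mem (.of R Q) :=
  S.mem_of_injective (M := .of R Q) (N := .of R T)
    ((P.subtype ∘ₗ Q.subtype).codRestrict T fun v => hQT v v.2)
    ((LinearMap.injective_codRestrict_iff _).mpr (P.injective_subtype.comp Q.injective_subtype)) hT

lemma mem_of_mem_ker_of_mem_range (f : M →ₗ[R] N) (hker : S.mem (.of R (LinearMap.ker f)))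
    (hrange : S.mem (.of R (LinearMap.range f))) : S.mem (.of R M) :=
  S.mem_of_extension (A := .of R (LinearMap.ker f)) (M := .of R M) (B := .of R (LinearMap.range f))
    (LinearMap.ker f).subtype f.rangeRestrict (injective_subtype _) f.surjective_rangeRestrict
    (by rw [range_subtype, LinearMap.ker_rangeRestrict]) hker hrange

lemma mem_prod (hM : S.mem (.of R M)) (hN : S.mem (.of R N)) : S.mem (.of R (M × N)) :=
  S.mem_of_extension (A := .of R M) (M := .of R (M × N)) (B := .of R N)
    (LinearMap.inl R M N) (LinearMap.snd R M N) LinearMap.inl_injective LinearMap.snd_surjective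
    (LinearMap.range_inl R M N) hM hN

lemma mem_pi_fin (h : S.mem (.of R M)) : ∀ r : ℕ, S.mem (.of R (Fin r → M))
  | 0 => S.mem_of_surjective (M := .of R M) (N := .of R (Fin 0 → M)) 0
      (fun _ => ⟨0, Subsingleton.elim _ _⟩) h
  | r + 1 => S.mem_of_linearEquiv (Fin.consLinearEquiv R fun _ : Fin (r + 1) => M)
      (S.mem_prod h (mem_pi_fin h r))

variable {I : Ideal R}

/-- With generators `x₁, …, xᵣ` of `I`, the map `v ↦ (xᵢ v)ᵢ` sends `P` into `Qʳ` with kernel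
`(0 :_P I)`. -/
lemma mem_of_smul_le (hI : I.FG) {P Q : Submodule R M} (hIP : I • P ≤ Q)
    (h0 : S.mem (.of R (torsionBySet R M I))) (hQ : S.mem (.of R Q)) : S.mem (.of R P) := by
  obtain ⟨r, x, rfl⟩ := fg_iff_exists_fin_generating_family.mp hI
  have hx : ∀ i (v : P), x i • (v : M) ∈ Q :=
    fun i v => hIP (smul_mem_smul (subset_span ⟨i, rfl⟩) v.2)
  let φ : P →ₗ[R] Fin r → Q := LinearMap.pi fun i => (x i • P.subtype).codRestrict Q (hx i)
  refine S.mem_of_mem_ker_of_mem_range φ (S.mem_of_forall_coe_mem (fun v hv => ?_) h0)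
    (S.mem_of_le (le_top (a := LinearMap.range φ)) ?_)
  · rw [← Ideal.span, ← torsionBySet_eq_torsionBySet_span, mem_torsionBySet_iff]
    rintro ⟨_, i, rfl⟩
    exact congrArg Subtype.val (congrFun (LinearMap.mem_ker.mp hv) i)
  · exact S.mem_of_linearEquiv topEquiv.symm (S.mem_pi_fin hQ r)

lemma mem_torsionBySet_pow (hI : I.FG) (h : S.mem (.of R (torsionBySet R M I))) (n : ℕ) :
    S.mem (.of R (torsionBySet R M ↑(I ^ n))) := by
  induction n with
  | zero => exact S.mem_of_le (torsionBySet_le_torsionBySet_of_subset (by simp)) h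
  | succ n ih =>
    refine S.mem_of_smul_le hI (smul_le.mpr fun a ha v hv => ?_) h ih
    rw [mem_torsionBySet_iff] at hv ⊢
    rintro ⟨b, hb⟩
    rw [smul_smul]
    exact hv ⟨b * a, by rw [pow_succ]; exact Ideal.mul_mem_mul hb ha⟩

end SerreClass

/-- `Γ_I(M)`. -/
def torsionByPowers (I : Ideal R) (M : Type) [AddCommGroup M] [Module R M] : Submodule R M where
  carrier := {v | ∃ n : ℕ, ∀ a ∈ I ^ n, a • v = 0}
  zero_mem' := ⟨0, fun a _ => smul_zero a⟩
  add_mem' := by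
    rintro v w ⟨m, hm⟩ ⟨n, hn⟩
    refine ⟨m + n, fun a ha => ?_⟩
    rw [smul_add, hm a (Ideal.pow_le_pow_right (m.le_add_right n) ha),
      hn a (Ideal.pow_le_pow_right (n.le_add_left m) ha), add_zero]
  smul_mem' := by
    rintro b v ⟨n, hn⟩
    exact ⟨n, fun a ha => by rw [smul_comm, hn a ha, smul_zero]⟩

section TorsionByPowers

variable {I J : Ideal R} {M : Type} [AddCommGroup M] [Module R M]

lemma isTorsionByPowers_torsionByPowers :
    IsTorsionByPowers R I (.of R (torsionByPowers I M)) :=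
  fun ⟨_, n, hn⟩ => ⟨n, fun a ha => Subtype.ext (hn a ha)⟩

lemma IsTorsionByPowers.submodule (h : IsTorsionByPowers R I (.of R M)) (N : Submodule R M) :
    IsTorsionByPowers R I (.of R N) :=
  fun v => (h v).imp fun _ hn a ha => Subtype.ext (hn a ha)

lemma IsTorsionByPowers.of_le (hIJ : I ≤ J) {M : ModuleCat.{0} R}
    (h : IsTorsionByPowers R J M) : IsTorsionByPowers R I M :=
  fun v => (h v).imp fun n hn a ha => hn a (Ideal.pow_right_mono hIJ n ha)

lemma isTorsionByPowers_directSum {ι : Type} (M : ι → Type) [∀ i, AddCommGroup (M i)]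
    [∀ i, Module R (M i)] (h : ∀ i, IsTorsionByPowers R I (.of R (M i))) :
    IsTorsionByPowers R I (.of R (DirectSum ι M)) := by
  classical
  intro v
  change v ∈ torsionByPowers I (DirectSum ι M)
  induction v using DirectSum.induction_on with
  | zero => exact zero_mem _
  | of i x =>
    obtain ⟨n, hn⟩ := h i x
    exact ⟨n, fun a ha => by
      rw [← DirectSum.lof_eq_of R, ← map_smul, hn a ha, map_zero]⟩
  | add v w hv hw => exact add_mem hv hw

end TorsionByPowers

section RingTheory

lemma mem_minimalPrimes_of_ne_maximalIdeal [IsLocalRing R] [Ring.KrullDimLE 1 R] {p : Ideal R}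
    (hp : p.IsPrime) (hpm : p ≠ maximalIdeal R) : p ∈ minimalPrimes R :=
  (Ring.krullDimLE_one_iff.mp ‹_› p hp).resolve_right fun h => hpm (eq_maximalIdeal h)

/-- In dimension at most one, the only prime strictly above `p` is the maximal ideal. -/
lemma exists_maximalIdeal_pow_le [IsNoetherianRing R] [IsLocalRing R] [Ring.KrullDimLE 1 R]
    {p J : Ideal R} (hp : p.IsPrime) (hpJ : p ≤ J.radical) (hJp : ¬ J ≤ p) :
    ∃ t : ℕ, maximalIdeal R ^ t ≤ J := by
  refine Ideal.exists_pow_le_of_le_radical_of_fg ?_ (IsNoetherian.noetherian _)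
  rw [Ideal.radical_eq_sInf]
  refine le_sInf fun q ⟨hJq, hq⟩ => ?_
  have hpq : p ≤ q := hpJ.trans (hq.isRadical.radical_le_iff.mpr hJq)
  rcases Ring.krullDimLE_one_iff.mp ‹_› q hq with hmin | hmax
  · exact absurd (hJq.trans (hmin.2 ⟨hp, bot_le⟩ hpq)) hJp
  · exact (eq_maximalIdeal hmax).ge

lemma exists_pow_forall_exists_mul_eq_zero [IsNoetherianRing R] {p : Ideal R}
    (hp : p ∈ minimalPrimes R) : ∃ c : ℕ, ∀ a ∈ p ^ c, ∃ s ∉ p, s * a = 0 := by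
  have := hp.1.1
  let A := Localization.AtPrime p
  have : Subsingleton (PrimeSpectrum A) :=
    IsLocalization.subsingleton_primeSpectrum_of_mem_minimalPrimes p hp A
  have : Ring.KrullDimLE 0 A := inferInstanceAs (Order.KrullDimLE 0 (PrimeSpectrum A))
  obtain ⟨c, hc⟩ := IsNoetherianRing.isNilpotent_nilradical A
  refine ⟨c, fun a ha => ?_⟩
  have hmem : algebraMap R A a ∈ nilradical A ^ c := by
    rw [Ring.KrullDimLE.nilradical_eq_maximalIdeal, ← Localization.AtPrime.map_eq_maximalIdeal,
      ← Ideal.map_pow]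
    exact Ideal.mem_map_of_mem _ ha
  rw [hc] at hmem
  obtain ⟨⟨s, hs⟩, h⟩ := (IsLocalization.map_eq_zero_iff p.primeCompl A a).mp hmem
  exact ⟨s, hs, h⟩

lemma maximalIdeal_pow_eq_bot_of_le_pow_succ [IsNoetherianRing R] [IsLocalRing R] {n : ℕ}
    (h : maximalIdeal R ^ n ≤ maximalIdeal R ^ (n + 1)) : maximalIdeal R ^ n = ⊥ :=
  Submodule.eq_bot_of_le_smul_of_le_jacobson_bot _ _ (IsNoetherian.noetherian _)
    (by rwa [smul_eq_mul, ← pow_succ']) (maximalIdeal_le_jacobson ⊥)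

/-- Otherwise `(q R_q) ^ n ≤ (q R_q) ^ (n + 1)`, so `q R_q` is nilpotent by Nakayama, which the
smaller prime `q₀` rules out. -/
lemma exists_mem_pow_forall_mul_notMem_pow_succ [IsNoetherianRing R] {q₀ q : Ideal R}
    (hq₀ : q₀.IsPrime) (hq : q.IsPrime) (hlt : q₀ < q) (n : ℕ) :
    ∃ a ∈ q ^ n, ∀ s ∉ q, s * a ∉ q ^ (n + 1) := by
  by_contra! hsat
  let A := Localization.AtPrime q
  have hle : maximalIdeal A ^ n ≤ maximalIdeal A ^ (n + 1) := by
    rw [← Localization.AtPrime.map_eq_maximalIdeal, ← Ideal.map_pow, ← Ideal.map_pow,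
      Ideal.map_le_iff_le_comap]
    intro a ha
    obtain ⟨s, hs, hsa⟩ := hsat a ha
    have hu : IsUnit (algebraMap R A s) := IsLocalization.map_units A (⟨s, hs⟩ : q.primeCompl)
    exact (Ideal.unit_mul_mem_iff_mem _ hu).mp (by
      rw [← map_mul]; exact Ideal.mem_map_of_mem _ hsa)
  obtain ⟨x, hxq, hxq₀⟩ := SetLike.exists_of_lt hlt
  have hx : algebraMap R A (x ^ n) = 0 := by
    have : algebraMap R A (x ^ n) ∈ maximalIdeal A ^ n := by
      rw [← Localization.AtPrime.map_eq_maximalIdeal, ← Ideal.map_pow]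
      exact Ideal.mem_map_of_mem _ (Ideal.pow_mem_pow hxq n)
    rwa [maximalIdeal_pow_eq_bot_of_le_pow_succ hle] at this
  obtain ⟨⟨s, hs⟩, hsx⟩ := (IsLocalization.map_eq_zero_iff q.primeCompl A _).mp hx
  have : s * x ^ n ∈ q₀ := hsx ▸ q₀.zero_mem
  exact (hq₀.mem_or_mem this).elim (fun h => hs (hlt.le h)) (fun h => hxq₀ (hq₀.mem_of_pow_mem n h))

end RingTheory

/-- Modules `M` with `q ^ n M_q = 0` for some `n`; the elements of `M` vanishing in `M_q` form
`torsion' R M q.primeCompl`. -/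
def SerreClass.powAnnihilatedAt (q : Ideal R) [q.IsPrime] : SerreClass R where
  mem M := ∃ n : ℕ, ∀ a ∈ q ^ n, ∀ v : M, a • v ∈ torsion' R M q.primeCompl
  mem_of_injective := by
    rintro M N f hf ⟨n, hn⟩
    refine ⟨n, fun a ha v => ?_⟩
    obtain ⟨s, hs⟩ := hn a ha (f v)
    rw [Submonoid.smul_def] at hs
    exact ⟨s, hf (by rw [Submonoid.smul_def, map_smul, map_smul, hs, map_zero])⟩
  mem_of_surjective := by
    rintro M N f hf ⟨n, hn⟩
    refine ⟨n, fun a ha v => ?_⟩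
    obtain ⟨w, rfl⟩ := hf v
    obtain ⟨s, hs⟩ := hn a ha w
    rw [Submonoid.smul_def] at hs
    exact ⟨s, by rw [Submonoid.smul_def, ← map_smul, ← map_smul, hs, map_zero]⟩
  mem_of_extension := by
    rintro A M B f g - - hfg ⟨nA, hA⟩ ⟨nB, hB⟩
    refine ⟨nB + nA, fun a ha v => ?_⟩
    rw [pow_add] at ha
    refine Submodule.mul_induction_on ha (fun b hb c hc => ?_) fun a a' ha ha' => ?_
    · obtain ⟨s, hs⟩ := hB b hb (g v)
      rw [Submonoid.smul_def] at hs
      obtain ⟨w, hw⟩ : (s : R) • b • v ∈ LinearMap.range f := by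
        rw [hfg, LinearMap.mem_ker, map_smul, map_smul, hs]
      obtain ⟨t, ht⟩ := hA c hc w
      rw [Submonoid.smul_def] at ht
      refine ⟨t * s, ?_⟩
      rw [Submonoid.smul_def, Submonoid.coe_mul, ← smul_smul, mul_comm b c, ← smul_smul,
        smul_comm (s : R), ← hw, ← map_smul, ← map_smul, ht, map_zero]
    · rw [add_smul]; exact add_mem ha ha'

section PowAnnihilatedAt

variable {q : Ideal R} [q.IsPrime]

lemma melkerssonCondition_powAnnihilatedAt {I : Ideal R} (hIq : ¬ I ≤ q) :
    MelkerssonCondition R (SerreClass.powAnnihilatedAt q).mem I := by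
  obtain ⟨x, hxI, hxq⟩ := Set.not_subset.mp hIq
  refine fun M h _ => ⟨0, fun a _ v => ?_⟩
  obtain ⟨k, hk⟩ := h v
  refine ⟨⟨x ^ k, fun h => hxq (Ideal.IsPrime.mem_of_pow_mem ‹_› k h)⟩, ?_⟩
  rw [Submonoid.smul_def, smul_comm, hk _ (Ideal.pow_mem_pow hxI k), smul_zero]

lemma not_melkerssonCondition_powAnnihilatedAt [IsNoetherianRing R] {q₀ : Ideal R}
    (hq₀ : q₀.IsPrime) (hlt : q₀ < q) :
    ¬ MelkerssonCondition R (SerreClass.powAnnihilatedAt q).mem q := by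
  let M := DirectSum ℕ fun n => R ⧸ q ^ (n + 1)
  have htors : IsTorsionByPowers R q (.of R M) :=
    isTorsionByPowers_directSum _ fun n x => ⟨n + 1, fun a ha => by
      obtain ⟨y, rfl⟩ := Ideal.Quotient.mk_surjective x
      rw [Algebra.smul_def, Ideal.Quotient.algebraMap_eq, ← map_mul, Ideal.Quotient.eq_zero_iff_mem]
      exact Ideal.mul_mem_right y _ ha⟩
  have hsoc : (SerreClass.powAnnihilatedAt q).mem (.of R (torsionBySet R M q)) := by
    refine ⟨1, fun a ha v => ⟨1, Subtype.ext ?_⟩⟩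
    rw [pow_one] at ha
    simpa using (mem_torsionBySet_iff _ _).mp v.2 ⟨a, ha⟩
  intro hC
  obtain ⟨n, hn⟩ := hC (.of R M) htors hsoc
  obtain ⟨a, ha, hnot⟩ := exists_mem_pow_forall_mul_notMem_pow_succ hq₀ ‹_› hlt n
  obtain ⟨⟨s, hs⟩, h⟩ := hn a ha (DirectSum.of _ n 1)
  rw [Submonoid.smul_def, smul_smul, ← DirectSum.lof_eq_of R, ← map_smul, DirectSum.lof_eq_of,
    ← map_zero (DirectSum.of _ n)] at h
  have h1 := DirectSum.of_injective n h
  rw [Algebra.smul_def, mul_one, Ideal.Quotient.algebraMap_eq, Ideal.Quotient.eq_zero_iff_mem]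
    at h1
  exact hnot s hs h1

end PowAnnihilatedAt

section DimensionLEOne

variable [IsNoetherianRing R] [IsLocalRing R] [Ring.KrullDimLE 1 R] (S : SerreClass R)

/-- For `M` that is `p`-torsion, `p ^ c M` lies in `Γ_m(M)`, which belongs to `S` by `(C_m)`; and
`M / (0 :_M p ^ c)` embeds into a finite power of `p ^ c M`. -/
lemma MP_eq_univ_of_closedPoint_mem (h : closedPoint R ∈ MP R S.mem) : MP R S.mem = Set.univ := by
  refine Set.eq_univ_of_forall fun p => ?_
  by_cases hp : p = closedPoint R
  · exact hp ▸ h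
  have hpm : p.asIdeal ≤ maximalIdeal R := le_maximalIdeal p.isPrime.ne_top
  obtain ⟨c, hc⟩ := exists_pow_forall_exists_mul_eq_zero
    (mem_minimalPrimes_of_ne_maximalIdeal p.isPrime fun h => hp (PrimeSpectrum.ext h))
  intro M htors hsoc
  have hΓ : S.mem (.of R (torsionByPowers (maximalIdeal R) M)) :=
    h _ isTorsionByPowers_torsionByPowers <| S.mem_of_forall_coe_mem (fun v hv =>
      (mem_torsionBySet_iff _ _).mpr fun ⟨a, ha⟩ =>
        congrArg Subtype.val ((mem_torsionBySet_iff _ _).mp hv ⟨a, hpm ha⟩)) hsoc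
  have hle : p.asIdeal ^ c • ⊤ ≤ torsionByPowers (maximalIdeal R) M := by
    refine smul_le.mpr fun a ha v _ => ?_
    obtain ⟨s, hs, hsa⟩ := hc a ha
    obtain ⟨k, hk⟩ := htors v
    obtain ⟨t, ht⟩ := exists_maximalIdeal_pow_le (J := Ideal.torsionOf R M (a • v)) p.isPrime
      (fun x hx => ⟨k, by rw [Ideal.mem_torsionOf_iff, smul_comm, hk _ (Ideal.pow_mem_pow hx k),
        smul_zero]⟩)
      (fun hJ => hs (hJ (by rw [Ideal.mem_torsionOf_iff, smul_smul, hsa, zero_smul])))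
    exact ⟨t, fun b hb => ht hb⟩
  exact S.mem_of_linearEquiv topEquiv <| S.mem_of_smul_le (IsNoetherian.noetherian _) hle
    (S.mem_torsionBySet_pow (IsNoetherian.noetherian _) hsoc c) hΓ

lemma closedPoint_mem_MP_of_mem_minimalPrimes {p q : PrimeSpectrum R}
    (hp : p.asIdeal ∈ minimalPrimes R) (hpq : p ≠ q) (hpS : p ∈ MP R S.mem)
    (hqS : q ∈ MP R S.mem) : closedPoint R ∈ MP R S.mem := by
  obtain ⟨k, hk⟩ := exists_maximalIdeal_pow_le (J := p.asIdeal ⊔ q.asIdeal) p.isPrime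
    (le_sup_left.trans Ideal.le_radical) fun h => hpq <| PrimeSpectrum.ext <|
      (hp.2 ⟨q.isPrime, bot_le⟩ (le_sup_right.trans h)).antisymm (le_sup_right.trans h)
  intro M htors hsoc
  let N := torsionBySet R M p.asIdeal
  refine hpS M (htors.of_le (le_maximalIdeal p.isPrime.ne_top)) <|
    hqS (.of R N) ((htors.of_le (le_maximalIdeal q.isPrime.ne_top)).submodule N) <|
    S.mem_of_forall_coe_mem (fun v hv => ?_)
      (S.mem_torsionBySet_pow (IsNoetherian.noetherian _) hsoc k)
  have hv' : p.asIdeal ⊔ q.asIdeal ≤ Ideal.torsionOf R M v :=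
    sup_le (fun a ha => (mem_torsionBySet_iff _ _).mp v.2 ⟨a, ha⟩)
      (fun a ha => congrArg Subtype.val ((mem_torsionBySet_iff _ _).mp hv ⟨a, ha⟩))
  exact (mem_torsionBySet_iff _ _).mpr fun ⟨b, hb⟩ => hv' (hk hb)

lemma MP_eq_univ_or_singleton_or_empty :
    MP R S.mem = Set.univ ∨
      (∃ p : PrimeSpectrum R, p.asIdeal ∈ minimalPrimes R ∧ MP R S.mem = {p}) ∨
      MP R S.mem = ∅ := by
  by_cases hm : closedPoint R ∈ MP R S.mem
  · exact .inl (MP_eq_univ_of_closedPoint_mem S hm)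
  obtain h | ⟨p, hp⟩ := (MP R S.mem).eq_empty_or_nonempty
  · exact .inr (.inr h)
  have hmin : ∀ q ∈ MP R S.mem, q.asIdeal ∈ minimalPrimes R := fun q hq =>
    mem_minimalPrimes_of_ne_maximalIdeal q.isPrime fun h =>
      hm (PrimeSpectrum.ext (x := q) (y := closedPoint R) h ▸ hq)
  refine .inr (.inl ⟨p, hmin p hp, Set.eq_singleton_iff_unique_mem.mpr ⟨hp, fun q hq => ?_⟩⟩)
  by_contra hqp
  exact hm (closedPoint_mem_MP_of_mem_minimalPrimes S (hmin p hp) (Ne.symm hqp) hp hq)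

end DimensionLEOne

lemma not_MP_powAnnihilatedAt_eq_univ_or_singleton_or_empty [IsNoetherianRing R] [IsLocalRing R]
    {q : Ideal R} (hq : q.IsPrime) (hqmin : q ∉ minimalPrimes R) (hqmax : ¬ q.IsMaximal) :
    ¬ (MP R (SerreClass.powAnnihilatedAt q).mem = Set.univ ∨
      (∃ p : PrimeSpectrum R, p.asIdeal ∈ minimalPrimes R ∧
        MP R (SerreClass.powAnnihilatedAt q).mem = {p}) ∨
      MP R (SerreClass.powAnnihilatedAt q).mem = ∅) := by
  obtain ⟨q₀, hq₀, hq₀q⟩ := Ideal.exists_minimalPrimes_le (bot_le (a := q))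
  have hlt : q₀ < q := lt_of_le_of_ne hq₀q fun h => hqmin (h ▸ hq₀)
  have hqm : q < maximalIdeal R :=
    lt_of_le_of_ne (le_maximalIdeal hq.ne_top) fun h => hqmax (h ▸ maximalIdeal.isMaximal R)
  have hm : closedPoint R ∈ MP R (SerreClass.powAnnihilatedAt q).mem :=
    melkerssonCondition_powAnnihilatedAt hqm.not_ge
  have hqS : (⟨q, hq⟩ : PrimeSpectrum R) ∉ MP R (SerreClass.powAnnihilatedAt q).mem :=
    not_melkerssonCondition_powAnnihilatedAt hq₀.1.1 hlt
  rintro (h | ⟨p, hp, h⟩ | h)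
  · exact hqS (h ▸ trivial)
  · obtain rfl : closedPoint R = p := by rwa [h] at hm
    exact (hlt.trans hqm).not_ge (hp.2 hq₀.1 (le_maximalIdeal hq₀.1.1.ne_top))
  · rwa [h] at hm

/-- Over a noetherian local ring: every Serre class `S` has `MP[S]` equal to
`Spec R`, `{p}` for a minimal prime `p`, or `∅`, iff `dim R ≤ 1`. -/
theorem stmt_16 {R : Type} [CommRing R] [IsNoetherianRing R] [IsLocalRing R] :
    (∀ S : SerreClass R,
        MP R S.mem = Set.univ ∨
        (∃ p : PrimeSpectrum R, p.asIdeal ∈ minimalPrimes R ∧ MP R S.mem = {p}) ∨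
        MP R S.mem = ∅) ↔
      ringKrullDim R ≤ 1 := by
  rw [← Nat.cast_one, ← Ring.krullDimLE_iff]
  refine ⟨fun hMP => ?_, fun _ => MP_eq_univ_or_singleton_or_empty⟩
  rw [Ring.krullDimLE_one_iff]
  by_contra! ⟨q, hq, hqmin, hqmax⟩
  exact not_MP_powAnnihilatedAt_eq_univ_or_singleton_or_empty hq hqmin hqmax (hMP _)
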